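/- arXiv:2203.09781 — 2 statements merged into one kernel-verified Lean document; each statement's English description precedes it below -/
import Mathlib

section
/- Let ℙ₀ be a probability measure on ℝ^D with ℙ₀(B(x,r)) ≤ κ₀·η(D)·r^D for every x ∈ ℝ^D, where η(D) is the volume of the unit ball. Let Y₁,…,Y_m be i.i.d. with law ℙ₀. Then for any r > 0, ℙ(‖Yⱼ − Yⱼ₊₁‖ ≤ r for all j = 1,…,m−1) ≤ (κ₀ η(D) r^D)^{m−1}. -/
/-!
Under the joint law ℙ₀^{⊗m} of the chain, split off the first point: by Tonelli, the probability
of a chain of length m + 1 is the integral, over chains of length m, of the ℙ₀-mass of the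
admissible first points. These lie in the ball of radius r about the second point, so each link
contributes a factor at most κ₀η(D)r^D, and induction on m gives the bound.
-/

open Metric MeasureTheory ProbabilityTheory
open scoped ENNReal

/-- Volume of the unit ball generalized to real dimension: η(s) = π^{s/2}/Γ(1+s/2). -/
noncomputable def etaVol (s : ℝ) : ℝ := Real.pi ^ (s / 2) / Real.Gamma (1 + s / 2)

lemma etaVol_pos {s : ℝ} (hs : -2 < s) : 0 < etaVol s :=
  div_pos (Real.rpow_pos_of_pos Real.pi_pos _) (Real.Gamma_pos_of_pos (by linarith))

lemma MeasureTheory.Measure.prod_inter_univ_prod_le_mul {α β : Type*} [MeasurableSpace α]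
    [MeasurableSpace β] {μ : Measure α} {ν : Measure β} [SFinite μ] [SFinite ν]
    {s : Set (α × β)} {t : Set β} (hs : MeasurableSet s) (ht : MeasurableSet t) {c : ℝ≥0∞}
    (hc : ∀ y, μ ((fun x => (x, y)) ⁻¹' s) ≤ c) :
    μ.prod ν (s ∩ Set.univ ×ˢ t) ≤ c * ν t := by
  have hsection (y : β) :
      μ ((fun x => (x, y)) ⁻¹' (s ∩ Set.univ ×ˢ t)) ≤ t.indicator (fun _ => c) y := by
    by_cases hy : y ∈ t
    · simpa [hy] using hc y
    · simp [hy]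
  calc μ.prod ν (s ∩ Set.univ ×ˢ t)
      = ∫⁻ y, μ ((fun x => (x, y)) ⁻¹' (s ∩ Set.univ ×ˢ t)) ∂ν :=
        Measure.prod_apply_symm (hs.inter (MeasurableSet.univ.prod ht))
    _ ≤ ∫⁻ y, t.indicator (fun _ => c) y ∂ν := lintegral_mono hsection
    _ = c * ν t := lintegral_indicator_const ht c

section Chain

variable {α : Type*} {R : α → α → Prop}

def chainSet (R : α → α → Prop) (m : ℕ) : Set (Fin m → α) :=
  {y | ∀ j : ℕ, ∀ hj : j + 1 < m, R (y ⟨j, Nat.lt_of_succ_lt hj⟩) (y ⟨j + 1, hj⟩)}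

lemma cons_mem_chainSet_succ_succ_iff {m : ℕ} (x : α) (z : Fin (m + 1) → α) :
    Fin.cons x z ∈ chainSet R (m + 2) ↔ R x (z 0) ∧ z ∈ chainSet R (m + 1) := by
  have hsucc (j : ℕ) (hj : j < m + 1) :
      (Fin.cons x z : Fin (m + 2) → α) ⟨j + 1, by omega⟩ = z ⟨j, hj⟩ :=
    Fin.cons_succ (α := fun _ => α) x z ⟨j, hj⟩
  constructor
  · intro h
    refine ⟨?_, fun j hj => ?_⟩
    · simpa [hsucc 0 (by omega)] using h 0 (by omega)
    · simpa only [hsucc j (by omega), hsucc (j + 1) hj] using h (j + 1) (by omega)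
  · rintro ⟨hx, hz⟩ (_ | j) hj
    · simpa [hsucc 0 (by omega)] using hx
    · simpa only [hsucc j (by omega), hsucc (j + 1) (by omega)] using hz j (by omega)

variable [MeasurableSpace α]

lemma measurableSet_chainSet (hR : MeasurableSet {p : α × α | R p.1 p.2}) (m : ℕ) :
    MeasurableSet (chainSet R m) := by
  have hpair (j : ℕ) (hj : j + 1 < m) :
      Measurable fun y : Fin m → α => (y ⟨j, Nat.lt_of_succ_lt hj⟩, y ⟨j + 1, hj⟩) :=
    (measurable_pi_apply _).prodMk (measurable_pi_apply _)
  simp only [chainSet, Set.ofPred_forall]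
  exact .iInter fun j => .iInter fun hj => hpair j hj hR

variable (μ : Measure α) [IsProbabilityMeasure μ] (hR : MeasurableSet {p : α × α | R p.1 p.2})
  {c : ℝ≥0∞} (hc : ∀ y, μ {x | R x y} ≤ c)
include hR hc

lemma pi_chainSet_succ_le (m : ℕ) :
    Measure.pi (fun _ : Fin (m + 1) => μ) (chainSet R (m + 1)) ≤ c ^ m := by
  induction m with
  | zero => simpa using prob_le_one
  | succ m ih =>
    have hsplit := (measurePreserving_piFinSuccAbove (fun _ : Fin (m + 2) => μ) 0).symm
    have hpre : (MeasurableEquiv.piFinSuccAbove (fun _ => α) 0).symm ⁻¹' chainSet R (m + 2) =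
        {p : α × (Fin (m + 1) → α) | R p.1 (p.2 0)} ∩ Set.univ ×ˢ chainSet R (m + 1) := by
      ext ⟨x, z⟩
      simp only [Set.mem_preimage, MeasurableEquiv.piFinSuccAbove_symm_apply,
        Fin.insertNthEquiv_zero, Set.mem_inter_iff, Set.mem_ofPred_eq, Set.mem_prod,
        Set.mem_univ, true_and]
      exact cons_mem_chainSet_succ_succ_iff x z
    have hfirst : MeasurableSet {p : α × (Fin (m + 1) → α) | R p.1 (p.2 0)} :=
      hR.preimage (measurable_fst.prodMk ((measurable_pi_apply 0).comp measurable_snd))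
    calc Measure.pi (fun _ => μ) (chainSet R (m + 2))
        = μ.prod (Measure.pi fun _ : Fin (m + 1) => μ)
            ({p | R p.1 (p.2 0)} ∩ Set.univ ×ˢ chainSet R (m + 1)) := by
          rw [← hpre, hsplit.measure_preimage (measurableSet_chainSet hR _).nullMeasurableSet]
      _ ≤ c * Measure.pi (fun _ => μ) (chainSet R (m + 1)) :=
          Measure.prod_inter_univ_prod_le_mul hfirst (measurableSet_chainSet hR _)
            fun z => hc (z 0)
      _ ≤ c * c ^ m := by gcongr
      _ = c ^ (m + 1) := (pow_succ' c m).symm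

lemma pi_chainSet_le (m : ℕ) :
    Measure.pi (fun _ : Fin m => μ) (chainSet R m) ≤ c ^ (m - 1) := by
  cases m with
  | zero => simpa using prob_le_one (μ := Measure.pi fun _ : Fin 0 => μ)
  | succ m => exact pi_chainSet_succ_le μ hR hc m

end Chain

theorem stmt11_general {D m : ℕ} (Ω : Type*) [MeasurableSpace Ω]
    (P : Measure Ω)
    (Y : Fin m → Ω → EuclideanSpace ℝ (Fin D)) (hmeas : ∀ j, Measurable (Y j))
    (hindep : iIndepFun Y P)
    (μ₀ : Measure (EuclideanSpace ℝ (Fin D))) [IsProbabilityMeasure μ₀]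
    (hlaw : ∀ j, P.map (Y j) = μ₀)
    (κ₀ r : ℝ) (hκ₀ : 0 < κ₀) (hr : 0 < r)
    (hball : ∀ x, μ₀ (closedBall x r) ≤ ENNReal.ofReal (κ₀ * etaVol D * r ^ D)) :
    (P {ω | ∀ j : ℕ, ∀ hj : j + 1 < m,
        dist (Y ⟨j, Nat.lt_of_succ_lt hj⟩ ω) (Y ⟨j + 1, hj⟩ ω) ≤ r}).toReal
      ≤ (κ₀ * etaVol D * r ^ D) ^ (m - 1) := by
  have hC : 0 ≤ κ₀ * etaVol D * r ^ D := by
    have := etaVol_pos (s := D) (by linarith [Nat.cast_nonneg (α := ℝ) D])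
    positivity
  have hdist : MeasurableSet {p : EuclideanSpace ℝ (Fin D) × _ | dist p.1 p.2 ≤ r} :=
    measurableSet_le measurable_dist measurable_const
  have hjoint : P.map (fun ω j => Y j ω) = Measure.pi fun _ => μ₀ := by
    simpa [hlaw] using hindep.map_fun_eq_pi_map fun j => (hmeas j).aemeasurable
  have hevent : P {ω | ∀ j : ℕ, ∀ hj : j + 1 < m,
      dist (Y ⟨j, Nat.lt_of_succ_lt hj⟩ ω) (Y ⟨j + 1, hj⟩ ω) ≤ r}
      = Measure.pi (fun _ => μ₀) (chainSet (fun x y => dist x y ≤ r) m) := by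
    rw [← hjoint, Measure.map_apply (measurable_pi_lambda _ hmeas)
      (measurableSet_chainSet hdist m)]
    rfl
  refine ENNReal.toReal_le_of_le_ofReal (pow_nonneg hC _) ?_
  rw [hevent, ENNReal.ofReal_pow hC]
  exact pi_chainSet_le μ₀ hdist hball m

/-- Chain estimate at the heart of Lemma 2: for i.i.d. Y₁,…,Y_m with law ℙ₀
satisfying ℙ₀(B(x,r)) ≤ κ₀η(D)r^D, the probability that all consecutive distances
are at most r is bounded by (κ₀η(D)r^D)^{m−1}. -/
theorem stmt11 {D m : ℕ} (hm : 1 ≤ m) (Ω : Type*) [MeasurableSpace Ω]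
    (P : Measure Ω) [IsProbabilityMeasure P]
    (Y : Fin m → Ω → EuclideanSpace ℝ (Fin D)) (hmeas : ∀ j, Measurable (Y j))
    (hindep : iIndepFun Y P)
    (μ₀ : Measure (EuclideanSpace ℝ (Fin D))) [IsProbabilityMeasure μ₀]
    (hlaw : ∀ j, P.map (Y j) = μ₀)
    (κ₀ r : ℝ) (hκ₀ : 0 < κ₀) (hr : 0 < r)
    (hball : ∀ x, μ₀ (closedBall x r) ≤ ENNReal.ofReal (κ₀ * etaVol D * r ^ D)) :
    (P {ω | ∀ j : ℕ, ∀ hj : j + 1 < m,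
        dist (Y ⟨j, Nat.lt_of_succ_lt hj⟩ ω) (Y ⟨j + 1, hj⟩ ω) ≤ r}).toReal
      ≤ (κ₀ * etaVol D * r ^ D) ^ (m - 1) :=
  stmt11_general Ω P Y hmeas hindep μ₀ hlaw κ₀ r hκ₀ hr hball
end

section
/- Let a, Λ, d, D, δ, 𝔟 > 0 with d < D. Set rₙ^d = D log n/(𝔞 d n) for a fixed 𝔞 > 0, and fix ε ∈ [0,1). Then Λ rₙ^{−d} exp(−𝔞 n rₙ^d) + nε(𝔟 ε n rₙ^D)^{⌊δ/rₙ⌋} → 0 as n → ∞. -/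
open Filter Real

private lemma aux_log_rpow (p : ℝ) {s : ℝ} (hs : 0 < s) :
    Tendsto (fun x : ℝ => Real.log x ^ p * x ^ (-s)) atTop (nhds 0) := by
  have h := (isLittleO_log_rpow_rpow_atTop p hs).tendsto_div_nhds_zero
  refine h.congr' ?_
  filter_upwards [eventually_gt_atTop (0 : ℝ)] with x hx
  rw [rpow_neg hx.le, div_eq_mul_inv]

/-- Consistency computation of Corollary 1: with rₙ^d = D log n/(𝔞 d n) and d < D,
both error terms of Theorem 2 tend to zero. -/
theorem stmt13 (Λ d D δ 𝔞 𝔟 : ℝ) (hΛ : 0 < Λ) (hd : 0 < d) (hD : d < D)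
    (hδ : 0 < δ) (h𝔞 : 0 < 𝔞) (h𝔟 : 0 < 𝔟) (ε : ℝ) (hε0 : 0 ≤ ε) (hε1 : ε < 1) :
    Tendsto
      (fun n : ℕ =>
        let r := (D * Real.log n / (𝔞 * d * n)) ^ (1 / d)
        Λ * r ^ (-d) * Real.exp (-(𝔞 * n * r ^ d))
          + n * ε * (𝔟 * ε * n * r ^ D) ^ (⌊δ / r⌋₊))
      atTop (nhds 0) := by
  have hD0 : 0 < D := hd.trans hD
  set p : ℝ := D / d with hp_def
  have hp1 : 1 < p := (one_lt_div hd).2 hD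
  have hα : 0 < p - 1 := by linarith
  set q : ℝ := (p - 1) / 2 with hq_def
  have hq0 : 0 < q := by rw [hq_def]; linarith
  set A : ℝ → ℝ := fun x => D * Real.log x / (𝔞 * d * x) with hA_def
  set r : ℝ → ℝ := fun x => A x ^ (1 / d) with hr_def
  -- basic facts on the event x ≥ 2
  have hbasic : ∀ x : ℝ, 2 ≤ x → 0 < x ∧ 0 < Real.log x ∧ 0 < A x ∧ 0 < r x := by
    intro x hx
    have hx0 : (0 : ℝ) < x := by linarith
    have hlog : 0 < Real.log x := Real.log_pos (by linarith)
    have hA : 0 < A x := div_pos (by positivity) (by positivity)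
    exact ⟨hx0, hlog, hA, Real.rpow_pos_of_pos hA _⟩
  -- decomposition of A x as a product, raised to a power
  have hApow : ∀ x : ℝ, 2 ≤ x → ∀ t : ℝ,
      A x ^ t = (D / (𝔞 * d)) ^ t * (Real.log x ^ t * x ^ (-t)) := by
    intro x hx t
    obtain ⟨hx0, hlog, hA, hr⟩ := hbasic x hx
    have hrw : A x = (D / (𝔞 * d)) * (Real.log x * x⁻¹) := by
      rw [hA_def]; field_simp
    rw [hrw, Real.mul_rpow (by positivity) (mul_nonneg hlog.le (by positivity)),
      Real.mul_rpow hlog.le (by positivity), Real.inv_rpow hx0.le,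
      ← Real.rpow_neg hx0.le]
  -- first term tends to zero
  have h1 : Tendsto (fun x : ℝ =>
      Λ * r x ^ (-d) * Real.exp (-(𝔞 * x * r x ^ d))) atTop (nhds 0) := by
    have hlim : Tendsto (fun x : ℝ =>
        (Λ * 𝔞 * d / D) * (Real.log x ^ (-(1 : ℝ)) * x ^ (-(p - 1)))) atTop
        (nhds ((Λ * 𝔞 * d / D) * 0)) :=
      (aux_log_rpow (-(1 : ℝ)) hα).const_mul _
    rw [mul_zero] at hlim
    refine hlim.congr' ?_
    filter_upwards [eventually_ge_atTop (2 : ℝ)] with x hx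
    obtain ⟨hx0, hlog, hA, hr⟩ := hbasic x hx
    have hrd : r x ^ d = A x := by
      rw [hr_def, ← Real.rpow_mul hA.le, one_div_mul_cancel hd.ne', Real.rpow_one]
    have hrnegd : r x ^ (-d) = (A x)⁻¹ := by
      rw [hr_def, ← Real.rpow_mul hA.le, show 1 / d * -d = -1 by field_simp,
        Real.rpow_neg_one]
    have hexp : 𝔞 * x * A x = p * Real.log x := by
      rw [hA_def, hp_def]; field_simp
    have hE : Real.exp (-(p * Real.log x)) = x ^ (-p) := by
      rw [Real.rpow_def_of_pos hx0]; congr 1; ring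
    have e2 : x ^ (-(p - 1)) = x * x ^ (-p) := by
      rw [show -(p - 1) = 1 + -p by ring, Real.rpow_add hx0, Real.rpow_one]
    rw [hrnegd, hrd, hexp, hE, Real.rpow_neg_one, e2, hA_def]
    field_simp
  -- second term tends to zero
  have h2 : Tendsto (fun x : ℝ =>
      x * ε * (𝔟 * ε * x * r x ^ D) ^ (⌊δ / r x⌋₊)) atTop (nhds 0) := by
    set m : ℕ := ⌈4 / (p - 1)⌉₊ with hm_def
    have hm0 : 0 < m := Nat.ceil_pos.2 (by positivity)
    have hceil : 4 / (p - 1) ≤ (m : ℝ) := Nat.le_ceil _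
    have hqm : (2 : ℝ) ≤ q * m := by
      calc (2 : ℝ) = q * (4 / (p - 1)) := by rw [hq_def]; field_simp; ring
        _ ≤ q * m := mul_le_mul_of_nonneg_left hceil hq0.le
    -- the auxiliary function φ
    have hφ : Tendsto (fun x : ℝ =>
        (𝔟 * (ε + 1)) * ((D / (𝔞 * d)) ^ p * (Real.log x ^ p * x ^ (-q)))) atTop
        (nhds 0) := by
      have := ((aux_log_rpow p hq0).const_mul ((D / (𝔞 * d)) ^ p)).const_mul (𝔟 * (ε + 1))
      simpa using this
    have hφle : ∀ᶠ x : ℝ in atTop,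
        (𝔟 * (ε + 1)) * ((D / (𝔞 * d)) ^ p * (Real.log x ^ p * x ^ (-q))) ≤ 1 :=
      hφ.eventually_le_const one_pos
    -- r tends to zero
    have hr0 : Tendsto r atTop (nhds 0) := by
      have h := (aux_log_rpow (1 / d) (s := 1 / d) (by positivity)).const_mul ((D / (𝔞 * d)) ^ (1 / d))
      rw [mul_zero] at h
      refine h.congr' ?_
      filter_upwards [eventually_ge_atTop (2 : ℝ)] with x hx
      rw [hr_def]
      exact (hApow x hx (1 / d)).symm
    have hrsmall : ∀ᶠ x : ℝ in atTop, r x < δ / m :=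
      hr0.eventually_lt_const (by positivity)
    -- squeeze
    refine squeeze_zero' ?_ ?_ (tendsto_rpow_neg_atTop one_pos)
    · filter_upwards [eventually_ge_atTop (2 : ℝ)] with x hx
      obtain ⟨hx0, hlog, hA, hr⟩ := hbasic x hx
      have hrD : 0 ≤ r x ^ D := Real.rpow_nonneg hr.le _
      positivity
    · filter_upwards [eventually_ge_atTop (2 : ℝ), hφle, hrsmall] with x hx hφx hrx
      obtain ⟨hx0, hlog, hA, hr⟩ := hbasic x hx
      have hx1 : (1 : ℝ) ≤ x := by linarith
      set B : ℝ := 𝔟 * ε * x * r x ^ D with hB_def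
      have hrDp : r x ^ D = A x ^ p := by
        rw [hr_def, ← Real.rpow_mul hA.le, hp_def]; congr 1; field_simp
      have hB0 : 0 ≤ B := by
        have : 0 ≤ r x ^ D := Real.rpow_nonneg hr.le _
        rw [hB_def]; positivity
      -- rewrite B
      have hx1p : x ^ (1 - p) = x ^ (-q) * x ^ (-q) := by
        rw [← Real.rpow_add hx0]; congr 1; rw [hq_def]; ring
      have hB_eq : B = (𝔟 * ε) * ((D / (𝔞 * d)) ^ p * (Real.log x ^ p * x ^ (-q)))
          * x ^ (-q) := by
        rw [hB_def, hrDp, hApow x hx p]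
        have hxp : x * x ^ (-p) = x ^ (1 - p) := by
          rw [show (1 : ℝ) - p = 1 + -p by ring, Real.rpow_add hx0, Real.rpow_one]
        calc 𝔟 * ε * x * ((D / (𝔞 * d)) ^ p * (Real.log x ^ p * x ^ (-p)))
            = (𝔟 * ε) * ((D / (𝔞 * d)) ^ p * Real.log x ^ p) * (x * x ^ (-p)) := by ring
          _ = (𝔟 * ε) * ((D / (𝔞 * d)) ^ p * Real.log x ^ p) * (x ^ (-q) * x ^ (-q)) := by
              rw [hxp, hx1p]
          _ = _ := by ring
      have hW : 0 ≤ (D / (𝔞 * d)) ^ p * (Real.log x ^ p * x ^ (-q)) := by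
        have h1' : (0:ℝ) ≤ Real.log x ^ p := Real.rpow_nonneg hlog.le _
        have h2' : (0:ℝ) ≤ x ^ (-q) := Real.rpow_nonneg hx0.le _
        positivity
      have hBle : B ≤ x ^ (-q) := by
        rw [hB_eq]
        calc (𝔟 * ε) * ((D / (𝔞 * d)) ^ p * (Real.log x ^ p * x ^ (-q))) * x ^ (-q)
            ≤ (𝔟 * (ε + 1)) * ((D / (𝔞 * d)) ^ p * (Real.log x ^ p * x ^ (-q)))
              * x ^ (-q) := by
              have hc : 𝔟 * ε ≤ 𝔟 * (ε + 1) := by nlinarith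
              exact mul_le_mul_of_nonneg_right
                (mul_le_mul_of_nonneg_right hc hW) (Real.rpow_nonneg hx0.le _)
          _ ≤ 1 * x ^ (-q) :=
              mul_le_mul_of_nonneg_right hφx (Real.rpow_nonneg hx0.le _)
          _ = x ^ (-q) := one_mul _
      have hB1 : B ≤ 1 :=
        hBle.trans (Real.rpow_le_one_of_one_le_of_nonpos hx1 (by linarith))
      have hk : m ≤ ⌊δ / r x⌋₊ := by
        apply Nat.le_floor
        rw [le_div_iff₀ hr]
        calc (m : ℝ) * r x ≤ (m : ℝ) * (δ / m) :=
              mul_le_mul_of_nonneg_left hrx.le (by positivity)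
          _ = δ := by field_simp
      calc x * ε * B ^ ⌊δ / r x⌋₊
          ≤ x * 1 * B ^ m := by
            apply mul_le_mul
            · exact mul_le_mul_of_nonneg_left hε1.le hx0.le
            · exact pow_le_pow_of_le_one hB0 hB1 hk
            · exact pow_nonneg hB0 _
            · positivity
        _ ≤ x * 1 * (x ^ (-q)) ^ m := by
            apply mul_le_mul_of_nonneg_left (pow_le_pow_left₀ hB0 hBle m) (by positivity)
        _ = x ^ (1 + -q * m) := by
            rw [← Real.rpow_natCast (x ^ (-q)) m, ← Real.rpow_mul hx0.le,
              Real.rpow_add hx0, Real.rpow_one, mul_one]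
        _ ≤ x ^ (-1 : ℝ) := by
            apply Real.rpow_le_rpow_of_exponent_le hx1
            linarith [hqm]
  have hsum := h1.add h2
  rw [add_zero] at hsum
  exact hsum.comp tendsto_natCast_atTop_atTop
end
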